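/- arXiv:1209.1462 — 8 statements merged into one kernel-verified Lean document; each statement's English description precedes it below -/
import Mathlib

section
/- Let Λ be a countably infinite set, 1 < p ≤ ∞, and let B_p = ℓ_p(Λ) if p < ∞ and B_∞ = c_0(Λ). Let (c_α)_{α∈Λ} be a sequence of complex numbers. Then 0 belongs to the weak closure of the set {c_α · e_α : α ∈ Λ} in B_p if and only if ∑_{α∈Λ} |c_α|^{-q} = ∞, where 1/p + 1/q = 1 (with the convention that terms with c_α = 0 contribute ∞ to the sum). -/
/-
If `∑ |c_α|^{-q} < ∞`, every `c_α` is nonzero and `(c_α⁻¹)` lies in `ℓ_q`, the dual of `B_p`;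
the functional it induces takes the value `1` at every `c_α e_α`, which separates `0` from the
set in the weak topology. Conversely, if a basic weak neighbourhood `{x | ‖F x‖ < ε, F ∈ I}` of
`0` misses every `c_α e_α`, then `|c_α|^{-q} ≤ ε^{-q} ∑_{F ∈ I} |F e_α|^q`, and the right-hand side
is summable because `(F e_α)_α ∈ ℓ_q` for every functional `F`: testing `F` on the finitely
supported vector with coefficients `conj (F e_α) |F e_α|^{q-2}` gives `‖(F e_α)‖_q ≤ ‖F‖`.
-/

open Filter
open scoped ENNReal NNReal ZeroAtInfty ComplexConjugate

theorem inv_rpow_le_inv_rpow_mul_rpow {a b ε q : ℝ} (hε : 0 < ε) (hb : 0 ≤ b) (hq : 0 ≤ q)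
    (h : ε ≤ a * b) : a⁻¹ ^ q ≤ ε⁻¹ ^ q * b ^ q := by
  have ha : 0 < a := pos_of_mul_pos_left (hε.trans_le h) hb
  rw [← Real.mul_rpow (by positivity) hb]
  refine Real.rpow_le_rpow (by positivity) ?_ hq
  rwa [inv_mul_eq_div, le_div_iff₀ hε, ← div_eq_inv_mul, div_le_iff₀ ha, mul_comm]

theorem le_rpow_of_le_mul_rpow_inv {p q X C : ℝ} (hpq : p.HolderConjugate q) (hX : 0 ≤ X)
    (hC : 0 ≤ C) (h : X ≤ C * X ^ p⁻¹) : X ≤ C ^ q := by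
  rcases hX.eq_or_lt with rfl | hX'
  · positivity
  rw [← Real.rpow_inv_le_iff_of_pos hX hC hpq.symm.pos]
  have hsplit : X ^ q⁻¹ * X ^ p⁻¹ = X := by
    rw [← Real.rpow_add hX', add_comm, hpq.inv_add_inv_eq_one, Real.rpow_one]
  exact le_of_mul_le_mul_right (hsplit.le.trans h) (by positivity)

theorem tsum_inv_nnnorm_rpow_ne_top_iff {ι E : Type*} [NormedAddCommGroup E] {c : ι → E} {q : ℝ}
    (hq : 0 < q) :
    ∑' i, ((‖c i‖₊ : ℝ≥0∞)⁻¹) ^ q ≠ ⊤ ↔ (∀ i, c i ≠ 0) ∧ Summable fun i => ‖c i‖⁻¹ ^ q := by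
  have hfinite (hc : ∀ i, c i ≠ 0) :
      ∑' i, ((‖c i‖₊ : ℝ≥0∞)⁻¹) ^ q ≠ ⊤ ↔ Summable fun i => ‖c i‖⁻¹ ^ q := by
    have hcoe (i : ι) : ((‖c i‖₊ : ℝ≥0∞)⁻¹) ^ q = ((‖c i‖₊⁻¹ ^ q : ℝ≥0) : ℝ≥0∞) := by
      rw [ENNReal.coe_rpow_of_nonneg _ hq.le, ENNReal.coe_inv (nnnorm_ne_zero_iff.mpr (hc i))]
    simp only [hcoe, ENNReal.tsum_coe_ne_top_iff_summable_coe, NNReal.coe_rpow, NNReal.coe_inv,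
      coe_nnnorm]
  refine ⟨fun h => ?_, fun ⟨hc, hs⟩ => (hfinite hc).mpr hs⟩
  have hc (i : ι) : c i ≠ 0 := fun hi =>
    ENNReal.ne_top_of_tsum_ne_top h i (by simp [hi, ENNReal.top_rpow_of_pos hq])
  exact ⟨hc, (hfinite hc).mp h⟩

section WeakSpace

variable {𝕜 E ι : Type*} [NormedField 𝕜] [AddCommGroup E] [Module 𝕜 E] [TopologicalSpace E]

theorem exists_finset_forall_exists_le_norm_of_zero_notMem_closure {x : ι → E}
    (h : (0 : WeakSpace 𝕜 E) ∉ closure {v | ∃ i, v = toWeakSpace 𝕜 E (x i)}) :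
    ∃ (I : Finset (E →L[𝕜] 𝕜)) (ε : ℝ), 0 < ε ∧ ∀ i, ∃ F ∈ I, ε ≤ ‖F (x i)‖ := by
  have hU := isClosed_closure.isOpen_compl.mem_nhds h
  obtain ⟨I, ε, hε, hball⟩ :=
    ((topDualPairing 𝕜 E).flip.weakBilin_withSeminorms.mem_nhds_iff _ _).mp hU
  refine ⟨I, ε, hε, fun i => ?_⟩
  by_contra! hlt
  exact hball ((Seminorm.mem_ball_zero _).mpr (Seminorm.finset_sup_apply_lt hε hlt))
    (subset_closure ⟨i, rfl⟩)

theorem zero_notMem_weakClosure_of_forall_apply_eq_one {x : ι → E} (F : E →L[𝕜] 𝕜)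
    (hF : ∀ i, F (x i) = 1) :
    (0 : WeakSpace 𝕜 E) ∉ closure {v | ∃ i, v = toWeakSpace 𝕜 E (x i)} := by
  have hclosed : IsClosed {v : WeakSpace 𝕜 E | (topDualPairing 𝕜 E).flip v F = 1} :=
    isClosed_eq (WeakBilin.eval_continuous _ F) continuous_const
  have hsub : {v | ∃ i, v = toWeakSpace 𝕜 E (x i)} ⊆ {v | (topDualPairing 𝕜 E).flip v F = 1} := by
    rintro _ ⟨i, rfl⟩
    exact hF i
  intro h0
  rw [← map_zero (toWeakSpace 𝕜 E)] at h0
  exact zero_ne_one ((map_zero F).symm.trans (closure_minimal hsub hclosed h0))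

theorem zero_mem_weakClosure_smul_iff {q : ℝ} (hq : 0 < q) {e : ι → E}
    (h_summable : ∀ F : E →L[𝕜] 𝕜, Summable fun i => ‖F (e i)‖ ^ q)
    (h_exists : ∀ f : ι → 𝕜, (Summable fun i => ‖f i‖ ^ q) → ∃ F : E →L[𝕜] 𝕜, ∀ i, F (e i) = f i)
    (c : ι → 𝕜) :
    (0 : WeakSpace 𝕜 E) ∈ closure {v | ∃ i, v = toWeakSpace 𝕜 E (c i • e i)} ↔
      ∑' i, ((‖c i‖₊ : ℝ≥0∞)⁻¹) ^ q = ⊤ := by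
  constructor
  · intro h0
    by_contra hne
    obtain ⟨hc, hs⟩ := (tsum_inv_nnnorm_rpow_ne_top_iff hq).mp hne
    obtain ⟨F, hF⟩ := h_exists (fun i => (c i)⁻¹) (by simpa only [norm_inv] using hs)
    refine zero_notMem_weakClosure_of_forall_apply_eq_one F (fun i => ?_) h0
    rw [map_smul, hF, smul_eq_mul, mul_inv_cancel₀ (hc i)]
  · intro htop
    by_contra h0
    obtain ⟨I, ε, hε, hI⟩ := exists_finset_forall_exists_le_norm_of_zero_notMem_closure h0
    have hle (i : ι) : ∃ F ∈ I, ε ≤ ‖c i‖ * ‖F (e i)‖ := by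
      simpa only [map_smul, norm_smul] using hI i
    refine (tsum_inv_nnnorm_rpow_ne_top_iff hq).mpr ⟨fun i hi => ?_, ?_⟩ htop
    · obtain ⟨F, -, hF⟩ := hle i
      rw [hi, norm_zero, zero_mul] at hF
      exact hε.not_ge hF
    · refine ((summable_sum (s := I) fun F _ => h_summable F).mul_left (ε⁻¹ ^ q)).of_nonneg_of_le
        (fun i => by positivity) fun i => ?_
      obtain ⟨F, hFI, hF⟩ := hle i
      calc ‖c i‖⁻¹ ^ q ≤ ε⁻¹ ^ q * ‖F (e i)‖ ^ q :=
            inv_rpow_le_inv_rpow_mul_rpow hε (norm_nonneg _) hq.le hF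
        _ ≤ ε⁻¹ ^ q * ∑ G ∈ I, ‖G (e i)‖ ^ q := by
            gcongr
            exact Finset.single_le_sum (f := fun G : E →L[𝕜] 𝕜 => ‖G (e i)‖ ^ q)
              (fun G _ => by positivity) hFI

end WeakSpace

section Norming

variable {𝕜 : Type*} [RCLike 𝕜]

theorem RCLike.exists_norm_le_rpow_sub_one_mul_eq (z : 𝕜) {r : ℝ} (hr : r ≠ 0) :
    ∃ w : 𝕜, ‖w‖ ≤ ‖z‖ ^ (r - 1) ∧ w * z = (‖z‖ ^ r : ℝ) := by
  rcases eq_or_ne z 0 with rfl | hz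
  · exact ⟨0, by simp [Real.rpow_nonneg], by simp [Real.zero_rpow hr]⟩
  have hz' : 0 < ‖z‖ := norm_pos_iff.mpr hz
  refine ⟨conj z * (‖z‖ ^ (r - 2) : ℝ), le_of_eq ?_, ?_⟩
  · rw [norm_mul, RCLike.norm_conj, RCLike.norm_ofReal, abs_of_nonneg (by positivity),
      show r - 1 = 1 + (r - 2) by ring, Real.rpow_add hz', Real.rpow_one]
  · rw [mul_right_comm, RCLike.conj_mul, ← RCLike.ofReal_pow, ← RCLike.ofReal_mul,
      ← Real.rpow_natCast, ← Real.rpow_add hz']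
    ring_nf

variable {E ι : Type*} [NormedAddCommGroup E] [NormedSpace 𝕜 E]

theorem ContinuousLinearMap.exists_sum_norm_rpow_le (F : E →L[𝕜] 𝕜) (e : ι → E) (s : Finset ι)
    {r : ℝ} (hr : r ≠ 0) :
    ∃ h : ι → 𝕜, (∀ i, ‖h i‖ ≤ ‖F (e i)‖ ^ (r - 1)) ∧
      ∑ i ∈ s, ‖F (e i)‖ ^ r ≤ ‖F‖ * ‖∑ i ∈ s, h i • e i‖ := by
  choose h hh hmul using fun i => RCLike.exists_norm_le_rpow_sub_one_mul_eq (F (e i)) hr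
  refine ⟨h, hh, ?_⟩
  have hF : F (∑ i ∈ s, h i • e i) = ((∑ i ∈ s, ‖F (e i)‖ ^ r : ℝ) : 𝕜) := by
    simp only [map_sum, map_smul, smul_eq_mul, hmul]
  calc ∑ i ∈ s, ‖F (e i)‖ ^ r = ‖F (∑ i ∈ s, h i • e i)‖ := by
        rw [hF, RCLike.norm_ofReal, abs_of_nonneg (by positivity)]
    _ ≤ ‖F‖ * ‖∑ i ∈ s, h i • e i‖ := F.le_opNorm _

end Norming

namespace lp

variable {𝕜 ι : Type*} [RCLike 𝕜] [DecidableEq ι]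

theorem exists_apply_single_eq {p q : ℝ≥0∞} [Fact (1 ≤ p)] [Fact (1 ≤ q)] [p.HolderConjugate q]
    (f : lp (fun _ : ι => 𝕜) q) :
    ∃ F : lp (fun _ : ι => 𝕜) p →L[𝕜] 𝕜, ∀ i, F (lp.single p i 1) = f i := by
  refine ⟨lp.dualPairing q p (fun _ => ContinuousLinearMap.mul 𝕜 𝕜) (K := 1)
    (fun _ => (ContinuousLinearMap.opNorm_mul_le 𝕜 𝕜).trans_eq NNReal.coe_one.symm) f, fun i => ?_⟩
  rw [lp.dualPairing_apply, tsum_eq_single i fun j hj => by simp [hj]]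
  simp

variable {p : ℝ≥0∞} [Fact (1 ≤ p)]

theorem summable_norm_apply_single_rpow {q : ℝ} (hpq : p.toReal.HolderConjugate q)
    (F : lp (fun _ : ι => 𝕜) p →L[𝕜] 𝕜) : Summable fun i => ‖F (lp.single p i 1)‖ ^ q := by
  refine summable_of_sum_le (c := ‖F‖ ^ q) (fun _ => by positivity) fun s => ?_
  obtain ⟨h, hh, hle⟩ := F.exists_sum_norm_rpow_le (fun i => lp.single p i 1) s hpq.symm.pos.ne'
  set X := ∑ i ∈ s, ‖F (lp.single p i 1)‖ ^ q
  have hv : ‖∑ i ∈ s, h i • lp.single p i (1 : 𝕜)‖ ≤ X ^ p.toReal⁻¹ := by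
    rw [Real.le_rpow_inv_iff_of_pos (norm_nonneg _) (by positivity) hpq.pos]
    simp only [← lp.single_smul, smul_eq_mul, mul_one]
    rw [lp.norm_sum_single hpq.pos]
    refine Finset.sum_le_sum fun i _ => ?_
    calc ‖h i‖ ^ p.toReal ≤ (‖F (lp.single p i 1)‖ ^ (q - 1)) ^ p.toReal := by gcongr; exact hh i
      _ = ‖F (lp.single p i 1)‖ ^ q := by
        rw [← Real.rpow_mul (norm_nonneg _), hpq.symm.sub_one_mul_conj]
  exact le_rpow_of_le_mul_rpow_inv hpq (by positivity) (norm_nonneg F)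
    (hle.trans (mul_le_mul_of_nonneg_left hv (norm_nonneg F)))

theorem zero_mem_weakClosure_smul_single_iff {q : ℝ} (hpq : p.toReal.HolderConjugate q)
    (c : ι → 𝕜) :
    (0 : WeakSpace 𝕜 (lp (fun _ : ι => 𝕜) p)) ∈
        closure {v | ∃ i, v = toWeakSpace 𝕜 _ (c i • lp.single p i 1)} ↔
      ∑' i, ((‖c i‖₊ : ℝ≥0∞)⁻¹) ^ q = ⊤ := by
  refine zero_mem_weakClosure_smul_iff hpq.symm.pos (summable_norm_apply_single_rpow hpq)
    (fun f hf => ?_) c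
  have hq : (ENNReal.ofReal q).toReal = q := ENNReal.toReal_ofReal hpq.symm.nonneg
  have : Fact (1 ≤ ENNReal.ofReal q) := ⟨ENNReal.one_le_ofReal.mpr hpq.symm.lt.le⟩
  have : p.HolderConjugate (ENNReal.ofReal q) := .of_toReal (by rwa [hq])
  exact exists_apply_single_eq ⟨f, memℓp_gen (by rwa [hq])⟩

end lp

namespace ZeroAtInftyContinuousMap

section Single

variable {Λ β : Type*} [TopologicalSpace Λ] [DiscreteTopology Λ] [DecidableEq Λ]
  [TopologicalSpace β] [Zero β]

def single (i : Λ) (b : β) : C₀(Λ, β) where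
  toFun := Pi.single i b
  continuous_toFun := continuous_of_discreteTopology
  zero_at_infty' := by
    rw [cocompact_eq_cofinite]
    exact tendsto_const_nhds.congr' <| (Set.finite_singleton i).eventually_cofinite_notMem.mono
      fun j hj => (Pi.single_eq_of_ne (M := fun _ => β) hj b).symm

@[simp]
theorem coe_single (i : Λ) (b : β) : ⇑(single i b) = Pi.single i b := rfl

theorem smul_single {R : Type*} [Zero R] [SMulWithZero R β] [ContinuousConstSMul R β] (r : R)
    (i : Λ) (b : β) : r • single i b = single i (r • b) := by
  ext j
  rcases eq_or_ne j i with rfl | hj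
  · simp
  · simp [hj]

theorem eq_single_iff {g : C₀(Λ, β)} {i : Λ} {b : β} :
    g = single i b ↔ g i = b ∧ ∀ j ≠ i, g j = 0 := by
  rw [DFunLike.ext_iff]
  refine ⟨fun h => ⟨by simpa using h i, fun j hj => by simpa [hj] using h j⟩, ?_⟩
  rintro ⟨hi, h0⟩ j
  rcases eq_or_ne j i with rfl | hj
  · simpa using hi
  · simpa [hj] using h0 j hj

end Single

section Norm

variable {α β : Type*} [TopologicalSpace α] [SeminormedAddCommGroup β]

theorem norm_coe_le_norm (g : C₀(α, β)) (x : α) : ‖g x‖ ≤ ‖g‖ :=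
  (BoundedContinuousFunction.norm_coe_le_norm g.toBCF x).trans_eq norm_toBCF_eq_norm

theorem norm_le {g : C₀(α, β)} {C : ℝ} (hC : 0 ≤ C) : ‖g‖ ≤ C ↔ ∀ x, ‖g x‖ ≤ C := by
  rw [← norm_toBCF_eq_norm, BoundedContinuousFunction.norm_le hC]
  rfl

end Norm

variable {Λ 𝕜 : Type*} [TopologicalSpace Λ] [RCLike 𝕜]

variable (𝕜) in
noncomputable def toLpInfty : C₀(Λ, 𝕜) →L[𝕜] lp (fun _ : Λ => 𝕜) ∞ :=
  LinearMap.mkContinuous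
    { toFun g := ⟨⇑g, memℓp_infty ⟨‖g‖, by rintro _ ⟨j, rfl⟩; exact norm_coe_le_norm g j⟩⟩
      map_add' _ _ := rfl
      map_smul' _ _ := rfl }
    1 fun g => by
      rw [one_mul]
      exact lp.norm_le_of_forall_le (norm_nonneg g) fun j => norm_coe_le_norm g j

theorem toLpInfty_apply (g : C₀(Λ, 𝕜)) (j : Λ) : toLpInfty 𝕜 g j = g j := rfl

variable [DiscreteTopology Λ] [DecidableEq Λ]

theorem summable_norm_apply_single (F : C₀(Λ, 𝕜) →L[𝕜] 𝕜) :
    Summable fun i => ‖F (single i 1)‖ := by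
  refine summable_of_sum_le (c := ‖F‖) (fun _ => norm_nonneg _) fun s => ?_
  obtain ⟨h, hh, hle⟩ := F.exists_sum_norm_rpow_le (fun i => single i (1 : 𝕜)) s one_ne_zero
  have hcoe : ⇑(∑ i ∈ s, h i • single i (1 : 𝕜)) = ∑ i ∈ s, h i • Pi.single i 1 :=
    map_sum (⟨⟨DFunLike.coe, coe_zero⟩, coe_add⟩ : C₀(Λ, 𝕜) →+ Λ → 𝕜) _ s
  have hv : ‖∑ i ∈ s, h i • single i (1 : 𝕜)‖ ≤ 1 := by
    refine (norm_le zero_le_one).mpr fun j => ?_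
    simp only [hcoe, Finset.sum_apply, Pi.smul_apply, Pi.single_apply, smul_eq_mul, mul_ite,
      mul_one, mul_zero, Finset.sum_ite_eq]
    split_ifs
    · simpa using hh j
    · simp
  simpa using hle.trans (mul_le_of_le_one_right (norm_nonneg F) hv)

theorem exists_apply_single_eq (f : lp (fun _ : Λ => 𝕜) 1) :
    ∃ F : C₀(Λ, 𝕜) →L[𝕜] 𝕜, ∀ i, F (single i 1) = f i := by
  obtain ⟨G, hG⟩ := lp.exists_apply_single_eq (p := ∞) f
  refine ⟨G ∘L toLpInfty 𝕜, fun i => ?_⟩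
  have : toLpInfty 𝕜 (single i (1 : 𝕜)) = lp.single ∞ i 1 := by
    ext j
    simp [toLpInfty_apply, lp.single_apply]
  rw [ContinuousLinearMap.comp_apply, this, hG]

theorem zero_mem_weakClosure_iff (c : Λ → 𝕜) :
    (0 : WeakSpace 𝕜 C₀(Λ, 𝕜)) ∈ closure {v : WeakSpace 𝕜 C₀(Λ, 𝕜) | ∃ (i : Λ) (g : C₀(Λ, 𝕜)),
        v = toWeakSpace 𝕜 _ g ∧ g i = c i ∧ ∀ j ≠ i, g j = 0} ↔
      ∑' i, ((‖c i‖₊ : ℝ≥0∞)⁻¹) ^ (1 : ℝ) = ⊤ := by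
  have hset : {v : WeakSpace 𝕜 C₀(Λ, 𝕜) | ∃ (i : Λ) (g : C₀(Λ, 𝕜)),
        v = toWeakSpace 𝕜 _ g ∧ g i = c i ∧ ∀ j ≠ i, g j = 0} =
      {v | ∃ i, v = toWeakSpace 𝕜 _ (c i • single i 1)} := by
    simp only [← eq_single_iff, exists_eq_right, smul_single, smul_eq_mul, mul_one]
  rw [hset]
  exact zero_mem_weakClosure_smul_iff one_pos (by simpa using summable_norm_apply_single)
    (fun f hf => exists_apply_single_eq ⟨f, memℓp_gen (by simpa using hf)⟩) c

end ZeroAtInftyContinuousMap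

theorem zero_mem_weakClosure_single_iff_general
    {Λ : Type*} [DecidableEq Λ] [TopologicalSpace Λ] [DiscreteTopology Λ]
    (c : Λ → ℂ) (q : ℝ) :
    (∀ (p : ℝ≥0∞) (_ : 1 < p) (_ : p ≠ ⊤) [Fact (1 ≤ p)], 1 / p.toReal + 1 / q = 1 →
      ((0 : WeakSpace ℂ (lp (fun _ : Λ => ℂ) p)) ∈
          closure {v : WeakSpace ℂ (lp (fun _ : Λ => ℂ) p) |
            ∃ α : Λ, v = toWeakSpace ℂ _ (c α • lp.single p α 1)} ↔
        ∑' α : Λ, ((‖c α‖₊ : ℝ≥0∞)⁻¹) ^ q = ⊤)) ∧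
    (q = 1 →
      ((0 : WeakSpace ℂ C₀(Λ, ℂ)) ∈
          closure {v : WeakSpace ℂ C₀(Λ, ℂ) | ∃ (α : Λ) (g : C₀(Λ, ℂ)),
            v = toWeakSpace ℂ _ g ∧ g α = c α ∧ ∀ β ≠ α, g β = 0} ↔
        ∑' α : Λ, ((‖c α‖₊ : ℝ≥0∞)⁻¹) ^ q = ⊤)) := by
  refine ⟨fun p hp hp_top _ hpq => lp.zero_mem_weakClosure_smul_single_iff ?_ c, ?_⟩
  · have hp_real : 1 < p.toReal := by
      simpa using (ENNReal.toReal_lt_toReal ENNReal.one_ne_top hp_top).mpr hp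
    exact Real.holderConjugate_iff.mpr ⟨hp_real, by simpa only [one_div] using hpq⟩
  · rintro rfl
    exact ZeroAtInftyContinuousMap.zero_mem_weakClosure_iff c

/-- Lemma 2.2: let `Λ` be countably infinite, `1 < p ≤ ∞`, `B_p = ℓ_p(Λ)` for `p < ∞` and
`B_∞ = c₀(Λ)`, and `1/p + 1/q = 1`. For complex numbers `(c_α)`, zero is in the weak
closure of `{c_α • e_α : α ∈ Λ}` in `B_p` iff `∑_α |c_α|^{-q} = ∞` (with terms where
`c_α = 0` contributing `∞`). The case `p < ∞` is the first clause (with `q` the real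
conjugate exponent); the case `p = ∞` (`c₀(Λ)`, `q = 1`) is the second clause, where
`c_α • e_α` is described pointwise. -/
theorem zero_mem_weakClosure_single_iff
    {Λ : Type*} [Countable Λ] [Infinite Λ] [DecidableEq Λ] [TopologicalSpace Λ] [DiscreteTopology Λ]
    (c : Λ → ℂ) (q : ℝ) :
    (∀ (p : ℝ≥0∞) (_ : 1 < p) (_ : p ≠ ⊤) [Fact (1 ≤ p)], 1 / p.toReal + 1 / q = 1 →
      ((0 : WeakSpace ℂ (lp (fun _ : Λ => ℂ) p)) ∈
          closure {v : WeakSpace ℂ (lp (fun _ : Λ => ℂ) p) |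
            ∃ α : Λ, v = toWeakSpace ℂ _ (c α • lp.single p α 1)} ↔
        ∑' α : Λ, ((‖c α‖₊ : ℝ≥0∞)⁻¹) ^ q = ⊤)) ∧
    (q = 1 →
      ((0 : WeakSpace ℂ C₀(Λ, ℂ)) ∈
          closure {v : WeakSpace ℂ C₀(Λ, ℂ) | ∃ (α : Λ) (g : C₀(Λ, ℂ)),
            v = toWeakSpace ℂ _ g ∧ g α = c α ∧ ∀ β ≠ α, g β = 0} ↔
        ∑' α : Λ, ((‖c α‖₊ : ℝ≥0∞)⁻¹) ^ q = ⊤)) :=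
  zero_mem_weakClosure_single_iff_general c q
end

section
/- Let (g_n)_{n∈ℕ} be a bounded sequence in a Hilbert space H such that ∑_{1 ≤ m < n < ∞} |⟨g_n, g_m⟩|² < ∞. Then (g_n)_{n∈ℕ} is a 2-sequence in H; more precisely, with d = sup_n ‖g_n‖ and c = ∑_{m<n} |⟨g_n,g_m⟩|², for every n ∈ ℕ, every a ∈ ℂ^n, and every choice of pairwise distinct positive integers m_1,…,m_n, one has ‖∑_{j=1}^n a_j g_{m_j}‖² ≤ (d² + √(2c)) ‖a‖₂². -/
/-!
Expanding `‖∑ aⱼ • g (mⱼ)‖²` as the double sum of `conj aⱼ * aₖ * ⟪g (mⱼ), g (mₖ)⟫`, the diagonal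
terms contribute at most `d² ‖a‖₂²`. By Cauchy–Schwarz over the pairs `j ≠ k`, the off-diagonal
terms are at most `‖a‖₂² (∑_{j ≠ k} |⟪g (mⱼ), g (mₖ)⟫|²)^{1/2}`, and since the `mⱼ` are distinct,
every pair `m < n` occurs at most twice in that sum, which is therefore at most `2c`.
-/

open Finset

theorem sum_mul_mul_le_sqrt_mul_sum_sq {ι : Type*} [Fintype ι] (s : Finset (ι × ι))
    (u : ι → ℝ) (b : ι × ι → ℝ) :
    ∑ p ∈ s, u p.1 * u p.2 * b p ≤ √(∑ p ∈ s, b p ^ 2) * ∑ i, u i ^ 2 := by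
  have hu : ∑ p ∈ s, (u p.1 * u p.2) ^ 2 ≤ (∑ i, u i ^ 2) ^ 2 := calc
    ∑ p ∈ s, (u p.1 * u p.2) ^ 2 ≤ ∑ p : ι × ι, (u p.1 * u p.2) ^ 2 :=
      sum_le_univ_sum_of_nonneg fun _ => sq_nonneg _
    _ = (∑ i, u i ^ 2) ^ 2 := by
      simp only [Fintype.sum_prod_type, sq (∑ i, u i ^ 2), sum_mul_sum, mul_pow]
  calc ∑ p ∈ s, u p.1 * u p.2 * b p
      ≤ √(∑ p ∈ s, (u p.1 * u p.2) ^ 2) * √(∑ p ∈ s, b p ^ 2) :=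
        Real.sum_mul_le_sqrt_mul_sqrt s _ _
    _ ≤ (∑ i, u i ^ 2) * √(∑ p ∈ s, b p ^ 2) := by
        gcongr
        exact (Real.sqrt_le_sqrt hu).trans_eq (Real.sqrt_sq (sum_nonneg fun _ _ => sq_nonneg _))
    _ = √(∑ p ∈ s, b p ^ 2) * ∑ i, u i ^ 2 := mul_comm _ _

theorem sum_le_two_mul_of_hasSum_lt {α : Type*} [LinearOrder α] {F : α × α → ℝ} {c : ℝ}
    (hF : ∀ q, 0 ≤ F q) (hF_swap : ∀ q, F q.swap = F q)
    (hc : HasSum (fun q : {q : α × α // q.2 < q.1} => F q) c)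
    (t : Finset (α × α)) (ht : ∀ q ∈ t, q.1 ≠ q.2) :
    ∑ q ∈ t, F q ≤ 2 * c := by
  set lower := {q : α × α | q.2 < q.1}.indicator F
  set upper := {q : α × α | q.1 < q.2}.indicator F
  have h_lower : HasSum lower c := hasSum_subtype_iff_indicator.mp hc
  have h_upper : HasSum upper c := by
    have : upper = lower ∘ Equiv.prodComm α α := by
      ext q
      simp [lower, upper, Set.indicator, ← hF_swap q]
    rw [this]
    exact (Equiv.prodComm α α).hasSum_iff.mpr h_lower
  have h_split : ∀ q ∈ t, F q = lower q + upper q := by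
    intro q hq
    rcases lt_or_gt_of_ne (ht q hq) with h | h <;>
      simp [lower, upper, h, h.not_gt]
  calc ∑ q ∈ t, F q = ∑ q ∈ t, (lower q + upper q) := sum_congr rfl h_split
    _ ≤ c + c := sum_le_hasSum t
        (fun q _ => add_nonneg (Set.indicator_nonneg (fun q _ => hF q) q)
          (Set.indicator_nonneg (fun q _ => hF q) q)) (h_lower.add h_upper)
    _ = 2 * c := by ring

section InnerProduct

variable {𝕜 E ι : Type*} [RCLike 𝕜] [NormedAddCommGroup E] [InnerProductSpace 𝕜 E] [Fintype ι]

theorem norm_sum_smul_sq_le_sum_norm_inner (a : ι → 𝕜) (x : ι → E) :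
    ‖∑ i, a i • x i‖ ^ 2 ≤ ∑ p : ι × ι, ‖a p.1‖ * ‖a p.2‖ * ‖(inner 𝕜 (x p.1) (x p.2) : 𝕜)‖ := by
  have h_expand : (inner 𝕜 (∑ i, a i • x i) (∑ i, a i • x i) : 𝕜)
      = ∑ p : ι × ι, (starRingEnd 𝕜) (a p.1) * a p.2 * inner 𝕜 (x p.1) (x p.2) := by
    simp only [sum_inner, inner_sum, inner_smul_left, inner_smul_right, Fintype.sum_prod_type,
      mul_sum]
    rw [sum_comm]
    exact sum_congr rfl fun _ _ => sum_congr rfl fun _ _ => by ring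
  calc ‖∑ i, a i • x i‖ ^ 2 = ‖(inner 𝕜 (∑ i, a i • x i) (∑ i, a i • x i) : 𝕜)‖ := by
        rw [inner_self_eq_norm_sq_to_K, ← RCLike.ofReal_pow, RCLike.norm_ofReal, abs_of_nonneg]
        positivity
    _ ≤ _ := by
        rw [h_expand]
        refine (norm_sum_le _ _).trans_eq (sum_congr rfl fun p _ => ?_)
        simp only [norm_mul, RCLike.norm_conj]

theorem norm_sum_smul_sq_le_of_sum_offDiag_le [DecidableEq ι] (a : ι → 𝕜) (x : ι → E)
    {d B : ℝ} (hx : ∀ i, ‖x i‖ ≤ d)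
    (hB : ∑ p ∈ univ.offDiag, ‖(inner 𝕜 (x p.1) (x p.2) : 𝕜)‖ ^ 2 ≤ B) :
    ‖∑ i, a i • x i‖ ^ 2 ≤ (d ^ 2 + √B) * ∑ i, ‖a i‖ ^ 2 := by
  set f : ι × ι → ℝ := fun p => ‖a p.1‖ * ‖a p.2‖ * ‖(inner 𝕜 (x p.1) (x p.2) : 𝕜)‖
  have h_split : ∑ p, f p = ∑ p ∈ univ.diag, f p + ∑ p ∈ univ.offDiag, f p := by
    rw [← sum_union (disjoint_diag_offDiag _), diag_union_offDiag, univ_product_univ]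
  have h_diag : ∑ p ∈ univ.diag, f p ≤ d ^ 2 * ∑ i, ‖a i‖ ^ 2 := by
    rw [sum_diag, mul_sum]
    refine sum_le_sum fun i _ => ?_
    have : ‖(inner 𝕜 (x i) (x i) : 𝕜)‖ ≤ d ^ 2 :=
      (norm_inner_le_norm (x i) (x i)).trans
        (by rw [← sq]; exact pow_le_pow_left₀ (norm_nonneg _) (hx i) 2)
    calc f (i, i) = ‖a i‖ ^ 2 * ‖(inner 𝕜 (x i) (x i) : 𝕜)‖ := by simp only [f, sq]
      _ ≤ ‖a i‖ ^ 2 * d ^ 2 := by gcongr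
      _ = d ^ 2 * ‖a i‖ ^ 2 := mul_comm _ _
  have h_offDiag : ∑ p ∈ univ.offDiag, f p ≤ √B * ∑ i, ‖a i‖ ^ 2 :=
    (sum_mul_mul_le_sqrt_mul_sum_sq _ (fun i => ‖a i‖)
      fun p => ‖(inner 𝕜 (x p.1) (x p.2) : 𝕜)‖).trans (by gcongr)
  calc ‖∑ i, a i • x i‖ ^ 2 ≤ ∑ p, f p := norm_sum_smul_sq_le_sum_norm_inner a x
    _ ≤ d ^ 2 * ∑ i, ‖a i‖ ^ 2 + √B * ∑ i, ‖a i‖ ^ 2 := h_split ▸ add_le_add h_diag h_offDiag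
    _ = (d ^ 2 + √B) * ∑ i, ‖a i‖ ^ 2 := by ring

end InnerProduct

theorem two_sequence_of_square_summable_inner_general
    {H : Type*} [NormedAddCommGroup H] [InnerProductSpace ℂ H]
    (g : ℕ → H) (d : ℝ) (hd : ∀ n, ‖g n‖ ≤ d) (c : ℝ)
    (hc : HasSum (fun q : {q : ℕ × ℕ // q.2 < q.1} =>
      ‖(inner ℂ (g q.1.1) (g q.1.2) : ℂ)‖ ^ 2) c) :
    ∀ (n : ℕ) (a : Fin n → ℂ) (m : Fin n → ℕ), Function.Injective m →
      ‖∑ j, a j • g (m j)‖ ^ 2 ≤ (d ^ 2 + Real.sqrt (2 * c)) * ∑ j, ‖a j‖ ^ 2 := by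
  intro n a m hm
  refine norm_sum_smul_sq_le_of_sum_offDiag_le a (g ∘ m) (fun j => hd (m j)) ?_
  have hm₂ : Function.Injective (Prod.map m m) := hm.prodMap hm
  calc ∑ p ∈ univ.offDiag, ‖(inner ℂ (g (m p.1)) (g (m p.2)) : ℂ)‖ ^ 2
      = ∑ q ∈ univ.offDiag.image (Prod.map m m), ‖(inner ℂ (g q.1) (g q.2) : ℂ)‖ ^ 2 := by
        rw [sum_image fun p _ q _ h => hm₂ h]; rfl
    _ ≤ 2 * c := by
        refine sum_le_two_mul_of_hasSum_lt (F := fun q => ‖(inner ℂ (g q.1) (g q.2) : ℂ)‖ ^ 2)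
          (fun _ => sq_nonneg _) (fun q => by rw [norm_inner_symm]; rfl) hc _ ?_
        simp only [mem_image, mem_offDiag, mem_univ, true_and]
        rintro _ ⟨p, hp, rfl⟩
        exact hm.ne hp

/-- Lemma 2.6: if `(g_n)` is a bounded sequence in a Hilbert space with
`c = ∑_{m < n} |⟨g_n, g_m⟩|² < ∞`, then `(g_n)` is a `2`-sequence; more precisely, with
`d = sup ‖g_n‖`, for all coefficients `a` and pairwise distinct indices `m_j` one has
`‖∑ a_j • g_{m_j}‖² ≤ (d² + √(2c)) ‖a‖₂²`. -/
theorem two_sequence_of_square_summable_inner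
    {H : Type*} [NormedAddCommGroup H] [InnerProductSpace ℂ H] [CompleteSpace H]
    (g : ℕ → H) (d : ℝ) (hd : ∀ n, ‖g n‖ ≤ d) (c : ℝ)
    (hc : HasSum (fun q : {q : ℕ × ℕ // q.2 < q.1} =>
      ‖(inner ℂ (g q.1.1) (g q.1.2) : ℂ)‖ ^ 2) c) :
    ∀ (n : ℕ) (a : Fin n → ℂ) (m : Fin n → ℕ), Function.Injective m →
      ‖∑ j, a j • g (m j)‖ ^ 2 ≤ (d ^ 2 + Real.sqrt (2 * c)) * ∑ j, ‖a j‖ ^ 2 :=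
  two_sequence_of_square_summable_inner_general g d hd c hc
end

section
/- Let T be a bounded linear operator on a Banach space B such that for every x ∈ B with T^n x ≠ 0 for all n ≥ 0, the sequence T^n x / ‖T^n x‖ converges weakly to 0 (i.e., T is antisupercyclic). Then for every x ∈ B, the projective orbit O_pr(T,x) = {λ T^n x : λ ∈ ℂ, n ∈ ℕ₀} is weakly sequentially closed in B. -/
/-!
Write `u k = c k • T^(m k) x`. If some exponent `n` occurs infinitely often among the `m k`, the
corresponding subsequence stays on the line `ℂ • T^n x`, and a weak limit of points of a line lies
on that line. Otherwise `m k → ∞`. A weakly convergent sequence is bounded (uniform boundedness in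
the bidual), so `‖f (u k)‖ = ‖u k‖ * ‖f (T^(m k) x / ‖T^(m k) x‖)‖ → 0` by antisupercyclicity.
Hence `y = 0 = 0 • x`.
-/

open Filter Topology

section

variable {𝕜 E : Type*} [RCLike 𝕜] [NormedAddCommGroup E] [NormedSpace 𝕜 E]

theorem exists_norm_le_of_forall_tendsto_dual {u : ℕ → E} {y : E}
    (hu : ∀ f : StrongDual 𝕜 E, Tendsto (fun k => f (u k)) atTop (𝓝 (f y))) :
    ∃ M, ∀ k, ‖u k‖ ≤ M := by
  -- Banach–Steinhaus applies because the dual is complete.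
  obtain ⟨M, hM⟩ := banach_steinhaus (g := fun k => NormedSpace.inclusionInDoubleDual 𝕜 E (u k))
    fun f => by
      obtain ⟨C, hC⟩ := (hu f).norm.bddAbove_range
      exact ⟨C, fun k => hC ⟨k, rfl⟩⟩
  exact ⟨M, fun k => (NormedSpace.inclusionInDoubleDualLi 𝕜).norm_map (u k) ▸ hM k⟩

theorem exists_eq_smul_of_forall_tendsto_dual {ι : Type*} {l : Filter ι} [l.NeBot]
    {c : ι → 𝕜} {v y : E}
    (h : ∀ f : StrongDual 𝕜 E, Tendsto (fun j => f (c j • v)) l (𝓝 (f y))) :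
    ∃ μ : 𝕜, y = μ • v := by
  rcases eq_or_ne v 0 with rfl | hv
  · refine ⟨0, ?_⟩
    rw [smul_zero]
    refine SeparatingDual.eq_zero_of_forall_dual_eq_zero (R := 𝕜) fun f => ?_
    exact tendsto_nhds_unique (h f) (by simp)
  obtain ⟨g, hg⟩ := SeparatingDual.exists_ne_zero (R := 𝕜) hv
  have hc : Tendsto c l (𝓝 (g y / g v)) := by
    simpa [hg] using (h g).div_const (g v)
  refine ⟨g y / g v, (SeparatingDual.eq_iff_forall_dual_eq (R := 𝕜)).2 fun f => ?_⟩
  refine tendsto_nhds_unique (h f) ?_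
  simpa using hc.mul_const (f v)

variable [NormedSpace ℝ E] [IsScalarTower ℝ 𝕜 E]

theorem norm_apply_smul_eq_norm_smul_mul (f : StrongDual 𝕜 E) (c : 𝕜) (w : E) :
    ‖f (c • w)‖ = ‖c • w‖ * ‖f (‖w‖⁻¹ • w)‖ := by
  rcases eq_or_ne w 0 with rfl | hw
  · simp
  rw [map_smul, ContinuousLinearMap.map_smul_of_tower, norm_smul, norm_smul, norm_smul, norm_inv,
    norm_norm]
  field_simp

theorem tendsto_apply_smul_of_tendsto_apply_normalize {v : ℕ → E} (f : StrongDual 𝕜 E)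
    (hv : Tendsto (fun n => f (‖v n‖⁻¹ • v n)) atTop (𝓝 0))
    {c : ℕ → 𝕜} {m : ℕ → ℕ} (hm : Tendsto m atTop atTop) {M : ℝ}
    (hM : ∀ k, ‖c k • v (m k)‖ ≤ M) :
    Tendsto (fun k => f (c k • v (m k))) atTop (𝓝 0) := by
  have hbound : ∀ k, ‖f (c k • v (m k))‖ ≤ M * ‖f (‖v (m k)‖⁻¹ • v (m k))‖ := fun k => by
    rw [norm_apply_smul_eq_norm_smul_mul]
    exact mul_le_mul_of_nonneg_right (hM k) (norm_nonneg _)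
  refine squeeze_zero_norm hbound ?_
  simpa using (hv.comp hm).norm.const_mul M

end

theorem Nat.exists_infinite_fiber_or_tendsto_atTop (m : ℕ → ℕ) :
    (∃ n, {k | m k = n}.Infinite) ∨ Tendsto m atTop atTop := by
  refine or_iff_not_imp_left.2 fun h => ?_
  push Not at h
  rw [← Nat.cofinite_eq_atTop]
  exact Tendsto.cofinite_of_finite_preimage_singleton fun n => (h n).to_subtype

section

variable {B : Type*} [NormedAddCommGroup B] [NormedSpace ℂ B]

def IsAntisupercyclic (T : B →L[ℂ] B) : Prop :=
  ∀ x : B, (∀ n : ℕ, (T ^ n) x ≠ 0) → ∀ f : StrongDual ℂ B,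
    Tendsto (fun n : ℕ => f (‖(T ^ n) x‖⁻¹ • (T ^ n) x)) atTop (𝓝 0)

theorem IsAntisupercyclic.tendsto_apply_normalize {T : B →L[ℂ] B} (hT : IsAntisupercyclic T)
    (x : B) (f : StrongDual ℂ B) :
    Tendsto (fun n : ℕ => f (‖(T ^ n) x‖⁻¹ • (T ^ n) x)) atTop (𝓝 0) := by
  by_cases hx : ∀ n, (T ^ n) x ≠ 0
  · exact hT x hx f
  push Not at hx
  obtain ⟨m, hm⟩ := hx
  refine tendsto_const_nhds.congr' ?_
  filter_upwards [eventually_ge_atTop m] with n hn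
  rw [← Nat.sub_add_cancel hn, pow_add]
  simp [hm]

end

theorem projOrbit_weaklySeqClosed_of_antisupercyclic_general
    {B : Type*} [NormedAddCommGroup B] [NormedSpace ℂ B]
    (T : B →L[ℂ] B)
    (hT : ∀ x : B, (∀ n : ℕ, (T ^ n) x ≠ 0) → ∀ f : B →L[ℂ] ℂ,
      Tendsto (fun n : ℕ => f (‖(T ^ n) x‖⁻¹ • (T ^ n) x)) atTop (nhds 0))
    (x : B) (y : B) (u : ℕ → B)
    (hu : ∀ k, u k ∈ {v : B | ∃ (lam : ℂ) (n : ℕ), v = lam • (T ^ n) x})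
    (hconv : ∀ f : B →L[ℂ] ℂ, Tendsto (fun k => f (u k)) atTop (nhds (f y))) :
    y ∈ {v : B | ∃ (lam : ℂ) (n : ℕ), v = lam • (T ^ n) x} := by
  choose c m hc using hu
  obtain rfl : u = fun k => c k • (T ^ m k) x := funext hc
  rcases Nat.exists_infinite_fiber_or_tendsto_atTop m with ⟨n, hn⟩ | hm
  · obtain ⟨φ, hφ, hφn⟩ :=
      extraction_of_frequently_atTop (Nat.frequently_atTop_iff_infinite.2 hn)
    obtain ⟨μ, rfl⟩ := exists_eq_smul_of_forall_tendsto_dual (c := c ∘ φ) (v := (T ^ n) x)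
      fun f => by simpa [Function.comp_def, hφn] using (hconv f).comp hφ.tendsto_atTop
    exact ⟨μ, n, rfl⟩
  · obtain ⟨M, hM⟩ := exists_norm_le_of_forall_tendsto_dual hconv
    have hy : y = 0 := SeparatingDual.eq_zero_of_forall_dual_eq_zero (R := ℂ) fun f =>
      tendsto_nhds_unique (hconv f) <| tendsto_apply_smul_of_tendsto_apply_normalize f
        (IsAntisupercyclic.tendsto_apply_normalize hT x f) hm hM
    exact ⟨0, 0, by simp [hy]⟩

/-- Theorem 2.1: if `T` is an antisupercyclic bounded operator on a Banach space `B`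
(that is, `T^n x / ‖T^n x‖ → 0` weakly whenever `T^n x ≠ 0` for all `n`), then every
projective orbit `{λ • T^n x}` is weakly sequentially closed. -/
theorem projOrbit_weaklySeqClosed_of_antisupercyclic
    {B : Type*} [NormedAddCommGroup B] [NormedSpace ℂ B] [CompleteSpace B]
    (T : B →L[ℂ] B)
    (hT : ∀ x : B, (∀ n : ℕ, (T ^ n) x ≠ 0) → ∀ f : B →L[ℂ] ℂ,
      Tendsto (fun n : ℕ => f (‖(T ^ n) x‖⁻¹ • (T ^ n) x)) atTop (nhds 0))
    (x : B) (y : B) (u : ℕ → B)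
    (hu : ∀ k, u k ∈ {v : B | ∃ (lam : ℂ) (n : ℕ), v = lam • (T ^ n) x})
    (hconv : ∀ f : B →L[ℂ] ℂ, Tendsto (fun k => f (u k)) atTop (nhds (f y))) :
    y ∈ {v : B | ∃ (lam : ℂ) (n : ℕ), v = lam • (T ^ n) x} :=
  projOrbit_weaklySeqClosed_of_antisupercyclic_general T hT x y u hu hconv
end

section
/- Let A ⊆ ℕ₀ have positive density, i.e., the limit of N(n)/n exists and is positive, where N(n) = #{m ∈ A : m ≤ n}. Let (s_n)_{n∈ℕ₀} be a monotonic sequence of positive real numbers. Then ∑_{n∈ℕ₀} s_n = ∞ if and only if ∑_{n∈A} s_n = ∞. -/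
/-!
Summability of `s` trivially implies summability over `A`. Conversely, enumerate `A` increasingly
as `a k = nth A k`. Then `k ≤ a k`, which settles nondecreasing `s`, and positive density gives
`a k ≤ C (k + 1)` for a constant `C`, so for nonincreasing `s` the series `∑ s (a k)` dominates
`∑ s (C k + C)`, a series over one residue class mod `C`, which converges only if `∑ s` does.
-/

open Filter Nat Topology

lemma ENNReal.tsum_ofReal_eq_top_iff_not_summable {ι : Type*} {f : ι → ℝ} (hf : ∀ i, 0 ≤ f i) :
    ∑' i, ENNReal.ofReal (f i) = ⊤ ↔ ¬Summable f := by
  refine ⟨fun h hs => hs.tsum_ofReal_ne_top h, fun h => by_contra fun hne => h ?_⟩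
  simpa only [ENNReal.toReal_ofReal (hf _)] using ENNReal.summable_toReal hne

lemma Antitone.summable_of_summable_comp_of_le_mul {f : ℕ → ℝ} (hf : Antitone f)
    (hf0 : ∀ n, 0 ≤ f n) {g : ℕ → ℕ} {C : ℕ} [NeZero C] (hg : ∀ k, g k ≤ C * (k + 1))
    (h : Summable (f ∘ g)) : Summable f := by
  have hsub : Summable fun k => f (C * k + C) :=
    h.of_nonneg_of_le (fun _ => hf0 _) fun k => hf (Nat.mul_add_one C k ▸ hg k)
  rwa [← summable_indicator_mod_iff_summable, summable_indicator_mod_iff hf] at hsub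

namespace Nat

variable {p : ℕ → Prop} [DecidablePred p]

lemma tendsto_count_div_of_tendsto_count_succ_div {d : ℝ}
    (h : Tendsto (fun n : ℕ => (count p (n + 1) : ℝ) / n) atTop (𝓝 d)) :
    Tendsto (fun n : ℕ => (count p n : ℝ) / n) atTop (𝓝 d) := by
  refine (tendsto_add_atTop_iff_nat 1).1 ?_
  have hratio := h.mul (tendsto_natCast_div_add_atTop (1 : ℝ))
  rw [mul_one] at hratio
  refine hratio.congr' (eventually_ne_atTop 0 |>.mono fun n hn => ?_)
  have : (n : ℝ) ≠ 0 := Nat.cast_ne_zero.2 hn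
  push_cast
  field_simp

lemma eventually_mul_le_count_of_tendsto {c d : ℝ} (hcd : c < d)
    (h : Tendsto (fun n : ℕ => (count p n : ℝ) / n) atTop (𝓝 d)) :
    ∀ᶠ n : ℕ in atTop, c * n ≤ count p n := by
  filter_upwards [h.eventually (lt_mem_nhds hcd), eventually_gt_atTop 0] with n hn hpos
  exact ((lt_div_iff₀ (Nat.cast_pos.2 hpos)).1 hn).le

lemma infinite_ofPred_of_eventually_mul_le_count {c : ℝ} (hc : 0 < c)
    (h : ∀ᶠ n : ℕ in atTop, c * n ≤ count p n) : (Set.ofPred p).Infinite := by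
  intro hfin
  obtain ⟨n, hn, hlarge⟩ :=
    (h.and (tendsto_natCast_atTop_atTop.eventually_gt_atTop (hfin.toFinset.card / c))).exists
  rw [div_lt_iff₀ hc] at hlarge
  have hcount : (count p n : ℝ) ≤ hfin.toFinset.card := by exact_mod_cast count_le_card hfin n
  linarith [mul_comm c n]

lemma exists_nth_le_mul_of_eventually_mul_le_count {c : ℝ} (hc : 0 < c)
    (h : ∀ᶠ n : ℕ in atTop, c * n ≤ count p n) :
    ∃ C : ℕ, NeZero C ∧ ∀ k, nth p k ≤ C * (k + 1) := by
  obtain ⟨n₀, hn₀⟩ := eventually_atTop.1 h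
  set C := n₀ + (⌈c⁻¹⌉₊ + 1)
  refine ⟨C, ⟨by omega⟩, fun k => ?_⟩
  have hcount := hn₀ (C * (k + 1))
    ((Nat.le_add_right _ _).trans (Nat.le_mul_of_pos_right C k.succ_pos))
  refine (nth_lt_of_lt_count ?_).le
  have hk : (k : ℝ) < c * (C * (k + 1) : ℕ) := by
    have hceil : 1 ≤ c * ⌈c⁻¹⌉₊ := by rw [← div_le_iff₀' hc, one_div]; exact Nat.le_ceil _
    push_cast [C]
    nlinarith [mul_nonneg hc.le (Nat.cast_nonneg (α := ℝ) n₀), (Nat.cast_nonneg (α := ℝ) k)]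
  exact_mod_cast hk.trans_le hcount

end Nat

theorem summable_of_summable_subtype_of_tendsto_count_div {A : Set ℕ} [DecidablePred (· ∈ A)]
    {d : ℝ} (hd : 0 < d) (hA : Tendsto (fun n : ℕ => (count (· ∈ A) n : ℝ) / n) atTop (𝓝 d))
    {f : ℕ → ℝ} (hf0 : ∀ n, 0 ≤ f n) (hf : Monotone f ∨ Antitone f)
    (h : Summable fun n : A => f n) : Summable f := by
  have hlower := eventually_mul_le_count_of_tendsto (half_lt_self hd) hA
  have hinf := infinite_ofPred_of_eventually_mul_le_count (half_pos hd) hlower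
  have hnth : Summable (f ∘ nth (· ∈ A)) :=
    h.comp_injective (i := fun k => (⟨nth (· ∈ A) k, nth_mem_of_infinite hinf k⟩ : A))
      fun _ _ hkl => nth_injective hinf (congrArg Subtype.val hkl)
  rcases hf with hmono | hanti
  · exact hnth.of_nonneg_of_le hf0 fun k => hmono (le_nth fun hfin => absurd hfin hinf)
  · obtain ⟨C, _, hC⟩ := exists_nth_le_mul_of_eventually_mul_le_count (half_pos hd) hlower
    exact hanti.summable_of_summable_comp_of_le_mul hf0 hC hnth

/-- Lemma 3.1: if `A ⊆ ℕ` has positive density and `(s_n)` is a monotonic sequence of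
positive reals, then `∑_{n} s_n = ∞` iff `∑_{n ∈ A} s_n = ∞`. -/
theorem sum_eq_top_iff_sum_over_posDensity_eq_top
    (A : Set ℕ) [DecidablePred (· ∈ A)] (d : ℝ) (hd : 0 < d)
    (hdens : Tendsto
      (fun n : ℕ => (((Finset.range (n + 1)).filter (fun m => m ∈ A)).card : ℝ) / (n : ℝ))
      atTop (nhds d))
    (s : ℕ → ℝ) (hs : ∀ n, 0 < s n) (hmono : Monotone s ∨ Antitone s) :
    (∑' n : ℕ, ENNReal.ofReal (s n) = ⊤) ↔ (∑' n : A, ENNReal.ofReal (s n) = ⊤) := by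
  simp only [← count_eq_card_filter_range] at hdens
  have hs0 : ∀ n, 0 ≤ s n := fun n => (hs n).le
  rw [ENNReal.tsum_ofReal_eq_top_iff_not_summable hs0,
    ENNReal.tsum_ofReal_eq_top_iff_not_summable fun n : A => hs0 n, not_iff_not]
  exact ⟨fun h => h.subtype A, summable_of_summable_subtype_of_tendsto_count_div hd
    (tendsto_count_div_of_tendsto_count_succ_div hdens) hs0 hmono⟩
end

section
/- Let Λ be a countably infinite set and (a_{α,β})_{α,β∈Λ} an infinite matrix of non-negative real numbers such that max{a_{α,β}, a_{β,α}} ≥ 1 for all α, β ∈ Λ. Define S_α = ∑_{β∈Λ} a_{α,β} ∈ [0,∞]. Then for every r > 1, the sum ∑_{α∈Λ} S_α^{−r} is finite (where S_α^{−r} is interpreted as 0 when S_α = ∞). -/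
/-!
Since `max (a α β) (a β α) ≥ 1`, every pair of indices in a finite set `F` contributes at least
`1` to `∑_{α ∈ F} S_α`, so `#F ^ 2 ≤ 2 ∑_{α ∈ F} S_α`; hence at most `2t` indices have `S_α ≤ t`.
Grouping the indices by the dyadic scale of `S_α` bounds `∑ S_α^{-r}` by
`∑ₙ 2^{n+2} 2^{-nr}`, a geometric series that converges for `r > 1`.
-/

open scoped ENNReal

open Finset

namespace ENNReal

theorem exists_two_pow_le_lt_two_pow_succ {x : ℝ≥0∞} (h1 : 1 ≤ x) (htop : x ≠ ⊤) :
    ∃ n : ℕ, 2 ^ n ≤ x ∧ x < 2 ^ (n + 1) := by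
  lift x to NNReal using htop
  obtain ⟨n, hle, hlt⟩ := exists_nat_pow_near (x := x) (y := 2) (by exact_mod_cast h1) (by norm_num)
  exact ⟨n, by exact_mod_cast hle, by exact_mod_cast hlt⟩

theorem pow_inv_rpow (x : ℝ≥0∞) (n : ℕ) (r : ℝ) : ((x ^ n)⁻¹) ^ r = (x⁻¹ ^ r) ^ n := by
  rw [ENNReal.inv_pow, ← rpow_natCast_mul, ← rpow_mul_natCast, mul_comm]

theorem tsum_inv_rpow_lt_top_of_encard_le {ι : Type*} {S : ι → ℝ≥0∞} (hS : ∀ i, 1 ≤ S i)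
    {C : ℝ≥0∞} (hC : C ≠ ⊤) (hcount : ∀ t, {i | S i ≤ t}.encard ≤ C * t)
    {r : ℝ} (hr : 1 < r) : ∑' i, (S i)⁻¹ ^ r < ⊤ := by
  set q : ℝ≥0∞ := 2⁻¹ ^ r
  have hq : 2 * q < 1 := by
    calc 2 * q < 2 * 2⁻¹ := by
          refine ENNReal.mul_lt_mul_right two_ne_zero ofNat_ne_top ?_
          simpa using rpow_lt_rpow_of_exponent_gt (by simp) (by simp) hr
      _ = 1 := ENNReal.mul_inv_cancel (by simp) (by simp)
  have hpt : ∀ i, (S i)⁻¹ ^ r ≤ ∑' n : ℕ, {i | S i ≤ 2 ^ (n + 1)}.indicator (fun _ ↦ q ^ n) i := by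
    intro i
    by_cases htop : S i = ⊤
    · simp [htop, zero_rpow_of_pos (zero_lt_one.trans hr)]
    obtain ⟨n, hle, hlt⟩ := exists_two_pow_le_lt_two_pow_succ (hS i) htop
    calc (S i)⁻¹ ^ r ≤ ((2 ^ n)⁻¹) ^ r := by gcongr
      _ = q ^ n := pow_inv_rpow 2 n r
      _ = {i | S i ≤ 2 ^ (n + 1)}.indicator (fun _ ↦ q ^ n) i := by
          rw [Set.indicator_of_mem (show i ∈ {i | S i ≤ 2 ^ (n + 1)} from hlt.le)]
      _ ≤ _ := ENNReal.le_tsum n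
  calc ∑' i, (S i)⁻¹ ^ r
      ≤ ∑' i, ∑' n : ℕ, {i | S i ≤ 2 ^ (n + 1)}.indicator (fun _ ↦ q ^ n) i :=
        ENNReal.tsum_le_tsum hpt
    _ = ∑' n : ℕ, {i | S i ≤ 2 ^ (n + 1)}.encard * q ^ n := by
        rw [ENNReal.tsum_comm]
        simp_rw [← _root_.tsum_subtype, tsum_set_const]
    _ ≤ ∑' n : ℕ, 2 * C * (2 * q) ^ n := by
        refine ENNReal.tsum_le_tsum fun n ↦ ?_
        calc {i | S i ≤ 2 ^ (n + 1)}.encard * q ^ n ≤ C * 2 ^ (n + 1) * q ^ n := by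
              gcongr; exact hcount _
          _ = 2 * C * (2 * q) ^ n := by ring
    _ = 2 * C * ∑' n : ℕ, (2 * q) ^ n := ENNReal.tsum_mul_left
    _ < ⊤ := mul_lt_top (mul_lt_top (by simp) hC.lt_top) (tsum_geometric_lt_top.2 hq)

end ENNReal

section TournamentMatrix

variable {ι : Type*} {a : ι → ι → ℝ≥0∞}

theorem card_mul_card_le_two_mul_sum_tsum (ha : ∀ i j, 1 ≤ a i j + a j i) (F : Finset ι) :
    (#F : ℝ≥0∞) * #F ≤ 2 * ∑ i ∈ F, ∑' j, a i j :=
  calc (#F : ℝ≥0∞) * #F = ∑ i ∈ F, ∑ j ∈ F, 1 := by simp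
    _ ≤ ∑ i ∈ F, ∑ j ∈ F, (a i j + a j i) := by gcongr with i _ j _; exact ha i j
    _ = 2 * ∑ i ∈ F, ∑ j ∈ F, a i j := by
        simp only [sum_add_distrib]
        rw [sum_comm (f := fun i j ↦ a j i), two_mul]
    _ ≤ 2 * ∑ i ∈ F, ∑' j, a i j := by gcongr; exact ENNReal.sum_le_tsum F

theorem card_le_two_mul_of_forall_tsum_le (ha : ∀ i j, 1 ≤ a i j + a j i) {F : Finset ι}
    {t : ℝ≥0∞} (hF : ∀ i ∈ F, ∑' j, a i j ≤ t) : (#F : ℝ≥0∞) ≤ 2 * t := by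
  rcases eq_or_ne (#F : ℝ≥0∞) 0 with h0 | h0
  · simp [h0]
  refine (ENNReal.mul_le_mul_iff_left h0 (ENNReal.natCast_ne_top _)).mp ?_
  calc (#F : ℝ≥0∞) * #F ≤ 2 * ∑ i ∈ F, ∑' j, a i j := card_mul_card_le_two_mul_sum_tsum ha F
    _ ≤ 2 * ∑ _i ∈ F, t := by gcongr with i hi; exact hF i hi
    _ = 2 * t * #F := by rw [sum_const, nsmul_eq_mul]; ring

theorem encard_setOf_tsum_le_le (ha : ∀ i j, 1 ≤ a i j + a j i) (t : ℝ≥0∞) :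
    {i | ∑' j, a i j ≤ t}.encard ≤ 2 * t := by
  rw [← ENNReal.tsum_set_one]
  refine tsum_le_of_sum_le' zero_le fun F ↦ ?_
  rw [sum_const, nsmul_one, ← card_map (Function.Embedding.subtype _)]
  refine card_le_two_mul_of_forall_tsum_le ha fun i hi ↦ ?_
  obtain ⟨i, -, rfl⟩ := mem_map.mp hi
  exact i.2

end TournamentMatrix

theorem sum_row_sums_inv_rpow_lt_top_general {Λ : Type*}
    (a : Λ → Λ → ℝ)
    (hmax : ∀ α β, 1 ≤ max (a α β) (a β α)) :
    ∀ r : ℝ, 1 < r →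
      ∑' α : Λ, ((∑' β : Λ, ENNReal.ofReal (a α β))⁻¹) ^ r < ⊤ := by
  intro r hr
  have hpair : ∀ α β, 1 ≤ ENNReal.ofReal (a α β) + ENNReal.ofReal (a β α) := fun α β ↦ by
    rcases le_max_iff.mp (hmax α β) with h | h
    · exact le_add_right (ENNReal.one_le_ofReal.2 h)
    · exact le_add_left (ENNReal.one_le_ofReal.2 h)
  have hdiag : ∀ α, 1 ≤ ∑' β, ENNReal.ofReal (a α β) := fun α ↦
    (ENNReal.one_le_ofReal.2 (max_self (a α α) ▸ hmax α α)).trans (ENNReal.le_tsum α)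
  exact ENNReal.tsum_inv_rpow_lt_top_of_encard_le hdiag ENNReal.ofNat_ne_top
    (encard_setOf_tsum_le_le hpair) hr

/-- Lemma 5.7: if `a` is an infinite nonnegative matrix over a countably infinite index set
with `max {a_{α,β}, a_{β,α}} ≥ 1` for all `α, β`, and `S_α = ∑_β a_{α,β}` (in `[0,∞]`),
then `∑_α S_α^{-r} < ∞` for every `r > 1`. -/
theorem sum_row_sums_inv_rpow_lt_top {Λ : Type*} [Countable Λ] [Infinite Λ]
    (a : Λ → Λ → ℝ) (ha : ∀ α β, 0 ≤ a α β)
    (hmax : ∀ α β, 1 ≤ max (a α β) (a β α)) :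
    ∀ r : ℝ, 1 < r →
      ∑' α : Λ, ((∑' β : Λ, ENNReal.ofReal (a α β))⁻¹) ^ r < ⊤ :=
  sum_row_sums_inv_rpow_lt_top_general a hmax
end

section
/- Let T be a bounded linear operator on a Banach space B and suppose there exists a compact operator S on B with dense range such that TS = ST. If there exists x ∈ B such that the set {λ T^n x : λ ∈ ℂ, n ∈ ℕ₀} is weakly sequentially dense in B, then T is supercyclic; in fact Sx is a supercyclic vector for T, i.e., {λ T^n (Sx) : λ ∈ ℂ, n ∈ ℕ₀} is norm-dense in B. -/
/-!
The set `C` of all `v` with `S v` in the norm closure of the projective orbit of `S x` is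
weakly sequentially closed, because a compact operator maps weakly convergent sequences (which
are bounded, by Banach–Steinhaus) into a norm-compact set, on which weak and norm convergence
agree. Since `S` commutes with `T`, `C` contains the projective orbit of `x`, so `C` is everything
and the closure of the orbit of `S x` contains the dense range of `S`.
-/

open Filter Topology Set

namespace WeakSpace

variable {𝕜 E : Type*} [RCLike 𝕜] [NormedAddCommGroup E] [NormedSpace 𝕜 E]

theorem isBounded_range_of_tendsto {u : ℕ → WeakSpace 𝕜 E} {p : WeakSpace 𝕜 E}
    (hu : Tendsto u atTop (𝓝 p)) :
    Bornology.IsBounded (range fun n => (toWeakSpace 𝕜 E).symm (u n)) := by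
  set ι := NormedSpace.inclusionInDoubleDualLi (E := E) 𝕜
  have hpointwise (f : StrongDual 𝕜 E) : ∃ C, ∀ n, ‖ι ((toWeakSpace 𝕜 E).symm (u n)) f‖ ≤ C := by
    obtain ⟨C, hC⟩ := (((WeakBilin.eval_continuous _ f).tendsto p).comp hu).norm.bddAbove_range
    exact ⟨C, fun n => hC ⟨n, rfl⟩⟩
  obtain ⟨C, hC⟩ := banach_steinhaus hpointwise
  refine isBounded_iff_forall_norm_le.2 ⟨C, ?_⟩
  rintro - ⟨n, rfl⟩
  simpa only [ι, LinearIsometry.norm_map] using hC n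

theorem tendsto_of_tendsto_toWeakSpace_of_isCompact {α : Type*} {l : Filter α} {f : α → E}
    {K : Set E} {y : E} (hK : IsCompact K) (hfK : ∀ᶠ a in l, f a ∈ K)
    (hf : Tendsto (fun a => toWeakSpace 𝕜 E (f a)) l (𝓝 (toWeakSpace 𝕜 E y))) :
    Tendsto f l (𝓝 y) := by
  refine hK.tendsto_nhds_of_unique_mapClusterPt hfK fun z _ hz => ?_
  have hz_weak : MapClusterPt (toWeakSpace 𝕜 E z) l (fun a => toWeakSpace 𝕜 E (f a)) :=
    hz.continuousAt_comp (toWeakSpaceCLM 𝕜 E).continuous.continuousAt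
  exact (toWeakSpace 𝕜 E).injective (eq_of_nhds_neBot (hz_weak.clusterPt.mono hf))

end WeakSpace

theorem IsCompactOperator.seqContinuous_weakSpace {𝕜 E F : Type*} [RCLike 𝕜]
    [NormedAddCommGroup E] [NormedSpace 𝕜 E] [NormedAddCommGroup F] [NormedSpace 𝕜 F]
    {S : E →L[𝕜] F} (hS : IsCompactOperator S) :
    SeqContinuous fun v : WeakSpace 𝕜 E => S ((toWeakSpace 𝕜 E).symm v) := by
  intro u p hu
  obtain ⟨K, hK, hSK⟩ :=
    hS.image_subset_compact_of_bounded (WeakSpace.isBounded_range_of_tendsto hu)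
  exact WeakSpace.tendsto_of_tendsto_toWeakSpace_of_isCompact (𝕜 := 𝕜) hK
    (Eventually.of_forall fun n => hSK ⟨_, ⟨n, rfl⟩, rfl⟩)
    (((WeakSpace.map S).continuous.tendsto p).comp hu)

theorem Commute.continuousLinearMap_pow_apply {R M : Type*} [Semiring R] [TopologicalSpace M]
    [AddCommMonoid M] [Module R M] {T S : M →L[R] M} (h : Commute T S) (n : ℕ) (x : M) :
    (T ^ n) (S x) = S ((T ^ n) x) :=
  DFunLike.congr_fun (h.pow_left n).eq x

theorem supercyclic_of_weaklySeqDense_projOrbit_general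
    {B : Type*} [NormedAddCommGroup B] [NormedSpace ℂ B]
    (T S : B →L[ℂ] B) (hS : IsCompactOperator (⇑S)) (hSr : DenseRange (⇑S))
    (hcomm : T ∘L S = S ∘L T) (x : B)
    (hx : ∀ C : Set (WeakSpace ℂ B), IsSeqClosed C →
      {v : WeakSpace ℂ B | ∃ (lam : ℂ) (n : ℕ), v = toWeakSpace ℂ B (lam • (T ^ n) x)} ⊆ C →
      C = Set.univ) :
    Dense {v : B | ∃ (lam : ℂ) (n : ℕ), v = lam • (T ^ n) (S x)} := by
  set O := {v : B | ∃ (lam : ℂ) (n : ℕ), v = lam • (T ^ n) (S x)}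
  set C := (fun v : WeakSpace ℂ B => S ((toWeakSpace ℂ B).symm v)) ⁻¹' closure O
  have hC : C = univ := by
    refine hx C (isClosed_closure.isSeqClosed.preimage hS.seqContinuous_weakSpace) ?_
    rintro _ ⟨lam, n, rfl⟩
    refine subset_closure ⟨lam, n, ?_⟩
    simp [Commute.continuousLinearMap_pow_apply hcomm]
  have hrange : range S ⊆ closure O := by
    rintro _ ⟨y, rfl⟩
    have hy : toWeakSpace ℂ B y ∈ C := hC ▸ mem_univ _
    exact hy
  exact dense_closure.1 (hSr.mono hrange)

/-- Proposition 6.1 (supercyclicity part): let `T` be a bounded operator on a Banach space `B`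
commuting with a compact operator `S` with dense range. If the projective orbit
`{λ • T^n x}` of some `x` is weakly sequentially dense in `B`, then `S x` is a supercyclic
vector for `T`: its projective orbit is norm dense. -/
theorem supercyclic_of_weaklySeqDense_projOrbit
    {B : Type*} [NormedAddCommGroup B] [NormedSpace ℂ B] [CompleteSpace B]
    (T S : B →L[ℂ] B) (hS : IsCompactOperator (⇑S)) (hSr : DenseRange (⇑S))
    (hcomm : T ∘L S = S ∘L T) (x : B)
    (hx : ∀ C : Set (WeakSpace ℂ B), IsSeqClosed C →
      {v : WeakSpace ℂ B | ∃ (lam : ℂ) (n : ℕ), v = toWeakSpace ℂ B (lam • (T ^ n) x)} ⊆ C →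
      C = Set.univ) :
    Dense {v : B | ∃ (lam : ℂ) (n : ℕ), v = lam • (T ^ n) (S x)} :=
  supercyclic_of_weaklySeqDense_projOrbit_general T S hS hSr hcomm x hx
end

section
/- Let T be a bilateral weighted shift on ℓ_p(ℤ) (1 ≤ p < ∞) with weight sequence (w_n), and let β(a,b) = ∏_{j=a}^b |w_j|. Then the Salas supercyclicity condition 'for all k ≥ 0: liminf_{n→∞} (max_{|j|≤k} β(j−n, j)) · (min_{|j|≤k} β(j, j+n))^{−1} = 0' holds if and only if for all k ≥ 0: liminf_{n→∞} β(k−n+1, k) · β(k+1, k+n)^{−1} = 0. -/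
open Filter

/-- `beta w a b = ∏_{j=a}^{b} |w_j|`. -/
noncomputable def beta (w : ℤ → ℂ) (a b : ℤ) : ℝ := ∏ j ∈ Finset.Icc a b, ‖w j‖

lemma beta_pos (w : ℤ → ℂ) (hw0 : ∀ n : ℤ, w n ≠ 0) (a b : ℤ) : 0 < beta w a b :=
  Finset.prod_pos fun j _ => norm_pos_iff.2 (hw0 j)

lemma beta_mul (w : ℤ → ℂ) (a b c : ℤ) (h1 : a ≤ b + 1) (h2 : b ≤ c) :
    beta w a b * beta w (b + 1) c = beta w a c := by
  unfold beta
  rw [← Finset.prod_union (by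
    rw [Finset.disjoint_left]
    intro x hx hx'
    simp only [Finset.mem_Icc] at hx hx'
    omega)]
  congr 1
  ext x
  simp only [Finset.mem_union, Finset.mem_Icc]
  omega

lemma beta_single (w : ℤ → ℂ) (a : ℤ) : beta w a a = ‖w a‖ := by
  unfold beta; rw [Finset.Icc_self, Finset.prod_singleton]

lemma beta_le_pow (w : ℤ → ℂ) (C : ℝ) (hwb : ∀ n : ℤ, ‖w n‖ ≤ C) (a b : ℤ) (N : ℕ)
    (hN : (b + 1 - a).toNat ≤ N) : beta w a b ≤ max C 1 ^ N := by
  have h1 : beta w a b ≤ max C 1 ^ (Finset.Icc a b).card := by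
    rw [← Finset.prod_const]
    exact Finset.prod_le_prod (fun i _ => norm_nonneg _)
      (fun i _ => le_trans (hwb i) (le_max_left _ _))
  have h2 : (Finset.Icc a b).card = (b + 1 - a).toNat := Int.card_Icc a b
  calc beta w a b ≤ max C 1 ^ (b + 1 - a).toNat := by rw [← h2]; exact h1
    _ ≤ max C 1 ^ N := pow_le_pow_right₀ (le_max_right _ _) hN

/-- Proposition 5.1 (supercyclicity part): for a bilateral weighted shift with bounded
nonvanishing weight sequence `w`, the Salas supercyclicity condition
`∀ k, liminf_n (max_{|j| ≤ k} β(j-n, j)) / (min_{|j| ≤ k} β(j, j+n)) = 0`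
holds iff `∀ k, liminf_n β(k-n+1, k) / β(k+1, k+n) = 0`.
(For nonnegative quantities, `liminf = 0` is expressed as: every `ε > 0` is frequently
exceeded from below.) -/
theorem salas_supercyclicity_criterion_iff
    (w : ℤ → ℂ) (hw0 : ∀ n : ℤ, w n ≠ 0) (C : ℝ) (hwb : ∀ n : ℤ, ‖w n‖ ≤ C) :
    (∀ k : ℕ, ∀ ε > (0 : ℝ), ∃ᶠ n : ℕ in atTop,
        ((Finset.Icc (-(k : ℤ)) (k : ℤ)).sup'
            (Finset.nonempty_Icc.2 (by omega)) (fun j => beta w (j - n) j)) *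
        ((Finset.Icc (-(k : ℤ)) (k : ℤ)).inf'
            (Finset.nonempty_Icc.2 (by omega)) (fun j => beta w j (j + n)))⁻¹ < ε) ↔
    (∀ k : ℕ, ∀ ε > (0 : ℝ), ∃ᶠ n : ℕ in atTop,
        beta w ((k : ℤ) - n + 1) k * (beta w ((k : ℤ) + 1) ((k : ℤ) + n))⁻¹ < ε) := by
  constructor
  · -- A → B
    intro hA k ε hε
    have hwk : (0 : ℝ) < ‖w (k : ℤ)‖ := norm_pos_iff.2 (hw0 _)
    have hwk1 : (0 : ℝ) < ‖w ((k : ℤ) + 1)‖ := norm_pos_iff.2 (hw0 _)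
    set c : ℝ := ‖w (k : ℤ)‖ / ‖w ((k : ℤ) + 1)‖ with hcdef
    have hc : 0 < c := div_pos hwk hwk1
    have h := hA (k + 1) (ε / c) (div_pos hε hc)
    refine h.mono ?_
    intro n hn
    have hj1 : ((k : ℤ) + 1) ∈ Finset.Icc (-((k + 1 : ℕ) : ℤ)) ((k + 1 : ℕ) : ℤ) := by
      simp only [Finset.mem_Icc]; omega
    have hj0 : ((k : ℤ)) ∈ Finset.Icc (-((k + 1 : ℕ) : ℤ)) ((k + 1 : ℕ) : ℤ) := by
      simp only [Finset.mem_Icc]; omega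
    set S := (Finset.Icc (-((k + 1 : ℕ) : ℤ)) ((k + 1 : ℕ) : ℤ)).sup'
        (Finset.nonempty_Icc.2 (by omega)) (fun j => beta w (j - n) j) with hSdef
    set I := (Finset.Icc (-((k + 1 : ℕ) : ℤ)) ((k + 1 : ℕ) : ℤ)).inf'
        (Finset.nonempty_Icc.2 (by omega)) (fun j => beta w j (j + n)) with hIdef
    have hS : beta w ((k : ℤ) + 1 - n) ((k : ℤ) + 1) ≤ S := Finset.le_sup' (fun j => beta w (j - (n:ℤ)) j) hj1
    have hI : I ≤ beta w (k : ℤ) ((k : ℤ) + n) := Finset.inf'_le (fun j => beta w j (j + (n:ℤ))) hj0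
    have hIpos : 0 < I := by
      rw [hIdef, Finset.lt_inf'_iff]
      exact fun j _ => beta_pos w hw0 _ _
    have hβb : 0 < beta w ((k : ℤ) + 1) ((k : ℤ) + n) := beta_pos w hw0 _ _
    have hB2 : 0 < beta w (k : ℤ) ((k : ℤ) + n) := beta_pos w hw0 _ _
    have e1 : beta w ((k : ℤ) - n + 1) k * ‖w ((k : ℤ) + 1)‖
        = beta w ((k : ℤ) + 1 - n) ((k : ℤ) + 1) := by
      have := beta_mul w ((k : ℤ) - n + 1) k ((k : ℤ) + 1) (by omega) (by omega)
      rw [beta_single] at this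
      rw [this]
      congr 1
      omega
    have e2 : beta w (k : ℤ) ((k : ℤ) + n)
        = ‖w (k : ℤ)‖ * beta w ((k : ℤ) + 1) ((k : ℤ) + n) := by
      have := beta_mul w (k : ℤ) k ((k : ℤ) + n) (by omega) (by omega)
      rw [beta_single] at this
      exact this.symm
    have key : beta w ((k : ℤ) - n + 1) k * (beta w ((k : ℤ) + 1) ((k : ℤ) + n))⁻¹
        = beta w ((k : ℤ) + 1 - n) ((k : ℤ) + 1) * (beta w (k : ℤ) ((k : ℤ) + n))⁻¹ * c := by
      rw [← e1, e2, hcdef, mul_inv, div_eq_mul_inv]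
      rw [show beta w ((k:ℤ) - n + 1) k * ‖w ((k:ℤ)+1)‖ *
            (‖w (k:ℤ)‖⁻¹ * (beta w ((k:ℤ)+1) ((k:ℤ)+n))⁻¹) * (‖w (k:ℤ)‖ * ‖w ((k:ℤ)+1)‖⁻¹)
          = beta w ((k:ℤ) - n + 1) k * (beta w ((k:ℤ)+1) ((k:ℤ)+n))⁻¹ *
            (‖w ((k:ℤ)+1)‖ * ‖w ((k:ℤ)+1)‖⁻¹) * (‖w (k:ℤ)‖ * ‖w (k:ℤ)‖⁻¹) from by ring]
      rw [mul_inv_cancel₀ hwk1.ne', mul_inv_cancel₀ hwk.ne', mul_one, mul_one]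
    rw [key]
    calc beta w ((k : ℤ) + 1 - n) ((k : ℤ) + 1) * (beta w (k : ℤ) ((k : ℤ) + n))⁻¹ * c
        ≤ S * I⁻¹ * c := by
          refine mul_le_mul_of_nonneg_right (mul_le_mul hS ?_ (by positivity) ?_) hc.le
          · exact inv_anti₀ hIpos hI
          · exact le_trans (beta_pos w hw0 _ _).le hS
      _ < (ε / c) * c := mul_lt_mul_of_pos_right hn hc
      _ = ε := div_mul_cancel₀ ε hc.ne'
  · -- B → A
    intro hB k ε hε
    set D : ℝ := max C 1 ^ (2 * k + 1) with hDdef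
    have hD1 : (1 : ℝ) ≤ D := one_le_pow₀ (le_max_right _ _)
    have hD0 : (0 : ℝ) < D := lt_of_lt_of_le one_pos hD1
    have hne : (Finset.Icc (-(k : ℤ)) (k : ℤ)).Nonempty := Finset.nonempty_Icc.2 (by omega)
    set c1 : ℝ := (Finset.Icc (-(k : ℤ)) (k : ℤ)).inf' hne (fun j => beta w (j + 1) k) with hc1def
    set c2 : ℝ := (Finset.Icc (-(k : ℤ)) (k : ℤ)).inf' hne (fun j => beta w j k) with hc2def
    have hc1 : 0 < c1 := by
      rw [hc1def, Finset.lt_inf'_iff]; exact fun j _ => beta_pos w hw0 _ _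
    have hc2 : 0 < c2 := by
      rw [hc2def, Finset.lt_inf'_iff]; exact fun j _ => beta_pos w hw0 _ _
    have hε' : 0 < ε * (c1 * c2) / (D * D) := by positivity
    have h := (hB k _ hε').and_eventually (eventually_ge_atTop (2 * k + 1))
    refine h.mono ?_
    rintro n ⟨hn, hn2⟩
    have hnz : 2 * (k : ℤ) + 1 ≤ (n : ℤ) := by exact_mod_cast hn2
    set βa := beta w ((k : ℤ) - n + 1) k with hβadef
    set βb := beta w ((k : ℤ) + 1) ((k : ℤ) + n) with hβbdef
    have hβa : 0 < βa := beta_pos w hw0 _ _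
    have hβb : 0 < βb := beta_pos w hw0 _ _
    -- bound the sup'
    have hSle : (Finset.Icc (-(k : ℤ)) (k : ℤ)).sup'
        (Finset.nonempty_Icc.2 (by omega)) (fun j => beta w (j - n) j)
        ≤ D * c1⁻¹ * βa := by
      refine Finset.sup'_le _ _ ?_
      intro j hj
      rw [Finset.mem_Icc] at hj
      have hP : 0 < beta w (j + 1) k := beta_pos w hw0 _ _
      have e1 : beta w (j - n) (k - n) * beta w ((k : ℤ) - n + 1) j = beta w (j - n) j := by
        have := beta_mul w (j - n) ((k : ℤ) - n) j (by omega) (by omega)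
        rw [show (k : ℤ) - n + 1 = (k : ℤ) - ↑n + 1 by ring] at this ⊢
        convert this using 3 <;> omega
      have e2 : beta w ((k : ℤ) - n + 1) j * beta w (j + 1) k = βa := by
        rw [hβadef]
        exact beta_mul w ((k : ℤ) - n + 1) j k (by omega) (by omega)
      have e3 : beta w (j - n) j * beta w (j + 1) k = beta w (j - n) (k - n) * βa := by
        rw [← e1, ← e2]; ring
      have heq : beta w (j - n) j = beta w (j - n) (k - n) * βa / beta w (j + 1) k := by
        rw [eq_div_iff hP.ne']; exact e3
      rw [heq]
      have hXD : beta w (j - n) (k - n) ≤ D :=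
        beta_le_pow w C hwb _ _ _ (by omega)
      have hc1P : c1 ≤ beta w (j + 1) k := Finset.inf'_le _ (by rw [Finset.mem_Icc]; omega)
      calc beta w (j - n) (k - n) * βa / beta w (j + 1) k
          ≤ D * βa / c1 :=
            div_le_div₀ (mul_nonneg hD0.le hβa.le) (mul_le_mul_of_nonneg_right hXD hβa.le) hc1 hc1P
        _ = D * c1⁻¹ * βa := by ring
    -- bound the inf'
    have hIle : c2 * D⁻¹ * βb ≤ (Finset.Icc (-(k : ℤ)) (k : ℤ)).inf'
        (Finset.nonempty_Icc.2 (by omega)) (fun j => beta w j (j + n)) := by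
      refine Finset.le_inf' _ _ ?_
      intro j hj
      rw [Finset.mem_Icc] at hj
      have hR : 0 < beta w (j + n + 1) ((k : ℤ) + n) := beta_pos w hw0 _ _
      have e1 : beta w j k * beta w ((k : ℤ) + 1) (j + n) = beta w j (j + n) := by
        exact beta_mul w j k (j + n) (by omega) (by omega)
      have e2 : beta w ((k : ℤ) + 1) (j + n) * beta w (j + n + 1) ((k : ℤ) + n) = βb := by
        rw [hβbdef]
        exact beta_mul w ((k : ℤ) + 1) (j + n) ((k : ℤ) + n) (by omega) (by omega)
      have e3 : beta w j (j + n) * beta w (j + n + 1) ((k : ℤ) + n) = beta w j k * βb := by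
        rw [← e1, ← e2]; ring
      have heq : beta w j (j + n) = beta w j k * βb / beta w (j + n + 1) ((k : ℤ) + n) := by
        rw [eq_div_iff hR.ne']; exact e3
      rw [heq]
      have hRD : beta w (j + n + 1) ((k : ℤ) + n) ≤ D :=
        beta_le_pow w C hwb _ _ _ (by omega)
      have hc2P : c2 ≤ beta w j k := Finset.inf'_le _ (by rw [Finset.mem_Icc]; omega)
      calc c2 * D⁻¹ * βb = c2 * βb / D := by ring
        _ ≤ beta w j k * βb / beta w (j + n + 1) ((k : ℤ) + n) :=
            div_le_div₀ (mul_nonneg (beta_pos w hw0 _ _).le hβb.le) (mul_le_mul_of_nonneg_right hc2P hβb.le) hR hRD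
    have hIpos : 0 < (Finset.Icc (-(k : ℤ)) (k : ℤ)).inf'
        (Finset.nonempty_Icc.2 (by omega : -(k:ℤ) ≤ k)) (fun j => beta w j (j + n)) := by
      rw [Finset.lt_inf'_iff]; exact fun j _ => beta_pos w hw0 _ _
    have hBpos : 0 < c2 * D⁻¹ * βb := by positivity
    calc (Finset.Icc (-(k : ℤ)) (k : ℤ)).sup'
            (Finset.nonempty_Icc.2 (by omega)) (fun j => beta w (j - n) j) *
          ((Finset.Icc (-(k : ℤ)) (k : ℤ)).inf'
            (Finset.nonempty_Icc.2 (by omega)) (fun j => beta w j (j + n)))⁻¹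
        = (Finset.Icc (-(k : ℤ)) (k : ℤ)).sup'
            (Finset.nonempty_Icc.2 (by omega)) (fun j => beta w (j - n) j) /
          (Finset.Icc (-(k : ℤ)) (k : ℤ)).inf'
            (Finset.nonempty_Icc.2 (by omega)) (fun j => beta w j (j + n)) :=
          (div_eq_mul_inv _ _).symm
      _ ≤ (D * c1⁻¹ * βa) / (c2 * D⁻¹ * βb) := div_le_div₀ (mul_nonneg (mul_nonneg hD0.le (inv_nonneg.2 hc1.le)) hβa.le) hSle hBpos hIle
      _ = (D * D / (c1 * c2)) * (βa * βb⁻¹) := by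
          field_simp
      _ < (D * D / (c1 * c2)) * (ε * (c1 * c2) / (D * D)) :=
          mul_lt_mul_of_pos_left hn (by positivity)
      _ = ε := by field_simp
end

section
/- Let T be a bilateral weighted shift on ℓ₂(ℤ) with weight sequence (w_n) and β(a,b) = ∏_{j=a}^b |w_j|. Suppose there exist c > 0 and m ∈ ℕ₀ with β(m−n+1, m) ≥ c·β(m+1, m+n) for all n ≥ 0. Then for every x ∈ ℓ₂(ℤ) with ⟨x, e_m⟩ ≠ 0 and T^n x ≠ 0 for all n, one has ∑_{n=0}^∞ (|⟨T^n x, e_m⟩| / ‖T^n x‖)² < ∞. -/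
open scoped ENNReal

/-- The key estimate in the proof of the supercyclicity part of Theorem 1.6:
for a bilateral weighted shift `T` on `ℓ₂(ℤ)` (with `T e_n = w_n e_{n-1}`) satisfying
`β(m-n+1, m) ≥ c β(m+1, m+n)` for all `n ≥ 0`, every `x ∈ ℓ₂(ℤ)` with `⟨x, e_m⟩ ≠ 0`
and `T^n x ≠ 0` for all `n` satisfies `∑_n (|⟨T^n x, e_m⟩| / ‖T^n x‖)² < ∞`. -/
theorem summable_sq_of_shift
    (w : ℤ → ℂ) (hw0 : ∀ n : ℤ, w n ≠ 0) (C : ℝ) (hwb : ∀ n : ℤ, ‖w n‖ ≤ C)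
    (T : lp (fun _ : ℤ => ℂ) 2 →L[ℂ] lp (fun _ : ℤ => ℂ) 2)
    (hT : ∀ (x : lp (fun _ : ℤ => ℂ) 2) (k : ℤ),
      (↑(T x) : ∀ _ : ℤ, ℂ) k = w (k + 1) * (↑x : ∀ _ : ℤ, ℂ) (k + 1))
    (c : ℝ) (hc : 0 < c) (m : ℕ)
    (hβ : ∀ n : ℕ, c * beta w ((m : ℤ) + 1) ((m : ℤ) + n) ≤ beta w ((m : ℤ) - n + 1) m)
    (x : lp (fun _ : ℤ => ℂ) 2)
    (hxm : (↑x : ∀ _ : ℤ, ℂ) (m : ℤ) ≠ 0) (hx0 : ∀ n : ℕ, (T ^ n) x ≠ 0) :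
    Summable fun n : ℕ =>
      (‖(↑((T ^ n) x) : ∀ _ : ℤ, ℂ) (m : ℤ)‖ / ‖(T ^ n) x‖) ^ 2 := by
  -- coordinate formula for T^n x
  have key : ∀ (n : ℕ) (k : ℤ), (↑((T ^ n) x) : ∀ _ : ℤ, ℂ) k
      = (∏ j ∈ Finset.Icc (k + 1) (k + (n : ℤ)), w j) * (↑x : ∀ _ : ℤ, ℂ) (k + n) := by
    intro n
    induction n with
    | zero => intro k; simp
    | succ n ih =>
      intro k
      have h1 : (T ^ (n + 1)) x = T ((T ^ n) x) := by
        rw [pow_succ', ContinuousLinearMap.mul_apply]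
      rw [h1, hT, ih]
      have hset : Finset.Icc (k + 1) (k + ((n : ℤ) + 1))
          = insert (k + 1) (Finset.Icc (k + 1 + 1) (k + 1 + (n : ℤ))) := by
        ext j; simp only [Finset.mem_Icc, Finset.mem_insert]; omega
      have harg : k + 1 + (n : ℤ) = k + ((n : ℕ) + 1 : ℕ) := by push_cast; ring
      push_cast
      rw [hset, Finset.prod_insert (by simp only [Finset.mem_Icc]; omega)]
      rw [harg]
      push_cast
      ring
  have hnormkey : ∀ (n : ℕ) (k : ℤ), ‖(↑((T ^ n) x) : ∀ _ : ℤ, ℂ) k‖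
      = beta w (k + 1) (k + (n : ℤ)) * ‖(↑x : ∀ _ : ℤ, ℂ) (k + n)‖ := by
    intro n k
    rw [key n k, norm_mul, beta, norm_prod]
  -- β positive
  have hβpos : ∀ a b : ℤ, 0 < beta w a b := by
    intro a b
    exact Finset.prod_pos fun j _ => norm_pos_iff.mpr (hw0 j)
  have hxmpos : 0 < ‖(↑x : ∀ _ : ℤ, ℂ) (m : ℤ)‖ := norm_pos_iff.mpr hxm
  -- lower bound on norm
  have hlow : ∀ n : ℕ, c * beta w ((m : ℤ) + 1) ((m : ℤ) + n) * ‖(↑x : ∀ _ : ℤ, ℂ) (m : ℤ)‖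
      ≤ ‖(T ^ n) x‖ := by
    intro n
    have h1 : ‖(↑((T ^ n) x) : ∀ _ : ℤ, ℂ) ((m : ℤ) - n)‖ ≤ ‖(T ^ n) x‖ :=
      lp.norm_apply_le_norm (by norm_num) _ _
    have h2 : ‖(↑((T ^ n) x) : ∀ _ : ℤ, ℂ) ((m : ℤ) - n)‖
        = beta w ((m : ℤ) - n + 1) (m : ℤ) * ‖(↑x : ∀ _ : ℤ, ℂ) (m : ℤ)‖ := by
      have e : (m : ℤ) - n + n = m := by ring
      rw [hnormkey n ((m : ℤ) - n), e]
    calc c * beta w ((m : ℤ) + 1) ((m : ℤ) + n) * ‖(↑x : ∀ _ : ℤ, ℂ) (m : ℤ)‖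
        ≤ beta w ((m : ℤ) - n + 1) (m : ℤ) * ‖(↑x : ∀ _ : ℤ, ℂ) (m : ℤ)‖ :=
          mul_le_mul_of_nonneg_right (hβ n) (norm_nonneg _)
      _ = ‖(↑((T ^ n) x) : ∀ _ : ℤ, ℂ) ((m : ℤ) - n)‖ := h2.symm
      _ ≤ ‖(T ^ n) x‖ := h1
  -- the bound on each term
  have hbound : ∀ n : ℕ,
      (‖(↑((T ^ n) x) : ∀ _ : ℤ, ℂ) (m : ℤ)‖ / ‖(T ^ n) x‖) ^ 2
      ≤ (c * ‖(↑x : ∀ _ : ℤ, ℂ) (m : ℤ)‖)⁻¹ ^ 2 * ‖(↑x : ∀ _ : ℤ, ℂ) ((m : ℤ) + n)‖ ^ 2 := by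
    intro n
    set βn := beta w ((m : ℤ) + 1) ((m : ℤ) + n) with hβn
    have hβnpos : 0 < βn := hβpos _ _
    have hdenpos : 0 < c * βn * ‖(↑x : ∀ _ : ℤ, ℂ) (m : ℤ)‖ := by positivity
    have h1 : ‖(↑((T ^ n) x) : ∀ _ : ℤ, ℂ) (m : ℤ)‖ / ‖(T ^ n) x‖
        ≤ (βn * ‖(↑x : ∀ _ : ℤ, ℂ) ((m : ℤ) + n)‖) / (c * βn * ‖(↑x : ∀ _ : ℤ, ℂ) (m : ℤ)‖) := by
      apply div_le_div₀ (by positivity) (le_of_eq (hnormkey n (m : ℤ))) hdenpos (hlow n)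
    have h2 : (βn * ‖(↑x : ∀ _ : ℤ, ℂ) ((m : ℤ) + n)‖) / (c * βn * ‖(↑x : ∀ _ : ℤ, ℂ) (m : ℤ)‖)
        = (c * ‖(↑x : ∀ _ : ℤ, ℂ) (m : ℤ)‖)⁻¹ * ‖(↑x : ∀ _ : ℤ, ℂ) ((m : ℤ) + n)‖ := by
      rw [show c * βn * ‖(↑x : ∀ _ : ℤ, ℂ) (m : ℤ)‖
          = βn * (c * ‖(↑x : ∀ _ : ℤ, ℂ) (m : ℤ)‖) by ring,
        mul_div_mul_left _ _ (ne_of_gt hβnpos), div_eq_inv_mul]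
    have h3 : (‖(↑((T ^ n) x) : ∀ _ : ℤ, ℂ) (m : ℤ)‖ / ‖(T ^ n) x‖) ^ 2
        ≤ ((c * ‖(↑x : ∀ _ : ℤ, ℂ) (m : ℤ)‖)⁻¹ * ‖(↑x : ∀ _ : ℤ, ℂ) ((m : ℤ) + n)‖) ^ 2 := by
      apply pow_le_pow_left₀ (by positivity) (h2 ▸ h1)
    calc _ ≤ _ := h3
      _ = _ := by ring
  -- summability of the comparison series
  have hsum : Summable fun k : ℤ => ‖(↑x : ∀ _ : ℤ, ℂ) k‖ ^ 2 := by
    have h := (lp.memℓp x).summable (by norm_num : (0:ℝ) < (2 : ℝ≥0∞).toReal)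
    have : (2 : ℝ≥0∞).toReal = (2 : ℝ) := by norm_num
    rw [this] at h
    convert h using 2 with k
    rw [← Real.rpow_natCast]
    norm_num
  have hsum2 : Summable fun n : ℕ => ‖(↑x : ∀ _ : ℤ, ℂ) ((m : ℤ) + n)‖ ^ 2 := by
    have hinj : Function.Injective (fun n : ℕ => (m : ℤ) + n) := by
      intro a b h
      simpa using h
    exact hsum.comp_injective hinj
  refine Summable.of_nonneg_of_le (fun n => by positivity) hbound ?_
  exact hsum2.mul_left _
end
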